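/- arXiv:2102.06002 — 2 statements merged into one kernel-verified Lean document; each statement's English description precedes it below -/
import Mathlib

section
/- Let p^1,...,p^m > 0 sum to 1, τ^j = ∑_{k>j} p^k, and θ^j = log(p^{j+1}/p^j). Then the inverse Ad-Cat link formula holds: τ = QPL exp(Lθ) / (1 + e_1ᵀ PL exp(Lθ)), where Q = -I + 1e_1ᵀ + e_1e_1ᵀ, P is the cyclic permutation matrix (a^1,...,a^{m-1}) ↦ (a^{m-1},a^1,...,a^{m-2}), L is the lower-triangular matrix of ones, and exp is entrywise. -/
/-!
Since `θ` is a vector of log-odds of adjacent categories, `Lθ` telescopes and `exp (Lθ)` is the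
vector of odds `p^{j+1} / p¹`; so `p¹ • L exp(Lθ)` is the vector of partial sums `p² + ⋯ + p^{j+1}`.
The cyclic shift `P` brings the full sum `p² + ⋯ + pᵐ = 1 - p¹` to the first slot, whence
`p¹ (1 + e₁ᵀ P L exp(Lθ)) = 1`, and `Q` turns the shifted partial sums into their complements,
which are the tails `τ`.
-/

open Finset Matrix Real

theorem Matrix.mulVec_apply_eq_sum_range_of_lowerOnes {R : Type*} [NonAssocSemiring R] {n : ℕ}
    {L : Matrix (Fin n) (Fin n) R} (hL : ∀ j k, L j k = if k ≤ j then 1 else 0)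
    (f : ℕ → R) (j : Fin n) :
    (L *ᵥ fun i => f i) j = ∑ i ∈ range (j + 1), f i := by
  simp only [mulVec, dotProduct, hL, ite_mul, one_mul, zero_mul]
  rw [← sum_filter, filter_ge_eq_Iic, Nat.range_succ_eq_Iic, ← Fin.map_valEmbedding_Iic, sum_map]
  rfl

theorem sum_range_add_two_eq_sum_Ioc {M : Type*} [AddCommMonoid M] (f : ℕ → M) (N : ℕ) :
    ∑ i ∈ range N, f (i + 2) = ∑ l ∈ Ioc 1 (N + 1), f l := by
  induction N with
  | zero => simp
  | succ N ih => rw [sum_range_succ, ih, sum_Ioc_succ_top (a := 1) (b := N + 1) (by omega)]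

theorem exp_sum_range_log_div {p : ℕ → ℝ} {N : ℕ} (hp : ∀ i ≤ N, 0 < p (i + 1)) :
    exp (∑ i ∈ range N, log (p (i + 2) / p (i + 1))) = p (N + 1) / p 1 := by
  induction N with
  | zero => simp [div_self (hp 0 le_rfl).ne']
  | succ N ih =>
    rw [sum_range_succ, exp_add, ih fun i hi => hp i (by omega),
      exp_log (div_pos (hp (N + 1) le_rfl) (hp N (by omega)))]
    field_simp [(hp N (by omega)).ne']

theorem mul_mulVec_exp_mulVec_of_lowerOnes {n : ℕ} {L : Matrix (Fin n) (Fin n) ℝ}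
    (hL : ∀ j k, L j k = if k ≤ j then 1 else 0) {p : ℕ → ℝ}
    (hp : ∀ i, 1 ≤ i → i ≤ n + 1 → 0 < p i) {θ : Fin n → ℝ}
    (hθ : ∀ k, θ k = log (p ((k : ℕ) + 2) / p ((k : ℕ) + 1))) (j : Fin n) :
    p 1 * (L *ᵥ fun r => exp ((L *ᵥ θ) r)) j = ∑ l ∈ Ioc 1 ((j : ℕ) + 2), p l := by
  have hodds : (fun r => exp ((L *ᵥ θ) r)) = fun r : Fin n => p (r + 2) / p 1 := by
    funext r
    have := r.isLt
    rw [show θ = _ from funext hθ,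
      mulVec_apply_eq_sum_range_of_lowerOnes hL (fun i => log (p (i + 2) / p (i + 1))),
      exp_sum_range_log_div fun i hi => hp (i + 1) (by omega) (by omega)]
  rw [hodds, mulVec_apply_eq_sum_range_of_lowerOnes hL (fun i => p (i + 2) / p 1), ← sum_div,
    sum_range_add_two_eq_sum_Ioc, mul_div_cancel₀ _ (hp 1 le_rfl (by omega)).ne']

theorem Matrix.mulVec_neg_one_add_vecMulVec_single {ι R : Type*} [Fintype ι] [DecidableEq ι]
    [CommRing R] (i₀ : ι) (w : ι → R) :
    (-1 + vecMulVec (fun _ => 1) (Pi.single i₀ 1) + vecMulVec (Pi.single i₀ 1) (Pi.single i₀ 1))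
      *ᵥ w = -w + (fun _ => w i₀) + Pi.single i₀ (w i₀) := by
  ext k
  simp [add_mulVec, neg_mulVec, vecMulVec_mulVec, Pi.single_apply]

theorem sum_Ioc_eq_mul_mulVec_cyclicShift {n : ℕ} {p : ℕ → ℝ} {v : Fin (n + 1) → ℝ}
    (hv : ∀ j : Fin (n + 1), p 1 * v j = ∑ l ∈ Ioc 1 ((j : ℕ) + 2), p l)
    {P : Matrix (Fin (n + 1)) (Fin (n + 1)) ℝ} (hP : ∀ a j, (P *ᵥ a) j = a (j - 1))
    (k : Fin (n + 1)) :
    ∑ l ∈ Ioc ((k : ℕ) + 1) (n + 2), p l = p 1 * ((-1 + vecMulVec (fun _ => 1) (Pi.single 0 1)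
      + vecMulVec (Pi.single 0 1) (Pi.single 0 1)) *ᵥ (P *ᵥ v)) k := by
  have hlast : p 1 * (P *ᵥ v) 0 = ∑ l ∈ Ioc 1 (n + 2), p l := by
    simp [hP, hv]
  rw [mulVec_neg_one_add_vecMulVec_single]
  rcases eq_or_ne k 0 with rfl | hk
  · simp [hlast]
  · have hk1 : ((k - 1 : Fin (n + 1)) : ℕ) + 2 = k + 1 := by
      rw [Fin.coe_sub_one, if_neg hk]
      have := Fin.pos_iff_ne_zero.2 hk
      omega
    have hsplit :=
      sum_Ioc_consecutive p (by omega : 1 ≤ (k : ℕ) + 1) (by omega : (k : ℕ) + 1 ≤ n + 2)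
    simp only [Pi.add_apply, Pi.neg_apply, Pi.single_eq_of_ne hk, add_zero, mul_add, mul_neg,
      hlast]
    rw [hP, hv, hk1]
    linarith

/-- Here `m = n + 2`, and `k : Fin (n + 1)` stands for the index `j = k + 1`. -/
theorem adcat_inverse_link (n : ℕ) (m : ℕ) (hm : m = n + 2)
    (p : ℕ → ℝ) (hp : ∀ l ∈ Finset.Icc 1 m, 0 < p l)
    (hsum : ∑ l ∈ Finset.Icc 1 m, p l = 1)
    (θ : Fin (n + 1) → ℝ)
    (hθ : ∀ k, θ k = Real.log (p ((k : ℕ) + 2) / p ((k : ℕ) + 1)))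
    (τ : Fin (n + 1) → ℝ)
    (hτ : ∀ k, τ k = ∑ l ∈ Finset.Icc ((k : ℕ) + 2) m, p l)
    (L : Matrix (Fin (n + 1)) (Fin (n + 1)) ℝ)
    (hL : ∀ j k, L j k = if k ≤ j then 1 else 0)
    (P : Matrix (Fin (n + 1)) (Fin (n + 1)) ℝ)
    (hP : ∀ (a : Fin (n + 1) → ℝ) (j), P.mulVec a j = a (j - 1))
    (Q : Matrix (Fin (n + 1)) (Fin (n + 1)) ℝ)
    (hQ : Q = -(1 : Matrix (Fin (n + 1)) (Fin (n + 1)) ℝ)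
        + Matrix.vecMulVec (fun _ => 1) (Pi.single 0 1)
        + Matrix.vecMulVec (Pi.single 0 1) (Pi.single 0 1)) :
    ∀ k, τ k = (Q * P * L).mulVec (fun r => Real.exp (L.mulVec θ r)) k
        / (1 + (P * L).mulVec (fun r => Real.exp (L.mulVec θ r)) 0) := by
  intro k
  subst hm
  have hpos : ∀ i, 1 ≤ i → i ≤ n + 2 → 0 < p i := fun i h1 h2 => hp i (mem_Icc.2 ⟨h1, h2⟩)
  have hv := mul_mulVec_exp_mulVec_of_lowerOnes hL hpos hθ
  have hden : p 1 * (1 + ((P * L) *ᵥ fun r => exp ((L *ᵥ θ) r)) 0) = 1 := by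
    rw [← mulVec_mulVec, mul_add, mul_one, hP, hv, ← hsum, add_sum_Ioc_eq_sum_Icc (by omega)]
    simp
  rw [hτ, show (k : ℕ) + 2 = k + 1 + 1 from rfl, Icc_add_one_left_eq_Ioc,
    sum_Ioc_eq_mul_mulVec_cyclicShift hv hP, ← hQ, mulVec_mulVec, mulVec_mulVec,
    eq_div_iff (right_ne_zero_of_mul_eq_one hden)]
  linear_combination ((Q * P * L) *ᵥ fun r => exp ((L *ᵥ θ) r)) k * hden
end

section
/- Suppose Y is a discrete random variable taking finitely many values and X a random vector. Then the conditional distribution of Y given X is determined by the conditional mean E(S | X), where S is the indicator-vector encoding of Y; consequently, for any measurable map g, E(S | X) = E(S | g(X)) implies Y ⊥ X | g(X). In particular the central mean subspace equals the central subspace: 𝒮_{E(S|X)} = 𝒮_{Y|X}. -/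
/-!
The conditional law of a finitely-valued `Y` given a σ-algebra is determined by the conditional
probabilities of its fibers `{Y = j}`, and the indicator encoding misses only one fiber, whose
indicator is `1` minus the others. So `E(S | X) = E(S | g(X))` gives
`P(Y ∈ s | X) = P(Y ∈ s | g(X))` for every `s`. Then, by the tower property and pulling out the
`σ(X)`-measurable factor `1_{X ∈ t}`,
`P(Y ∈ s, X ∈ t | g(X)) = E(1_{X ∈ t} P(Y ∈ s | X) | g(X)) = P(Y ∈ s | g(X)) P(X ∈ t | g(X))`,
which is the conditional independence of `Y` and `X` given `g(X)`.
-/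

open MeasureTheory ProbabilityTheory Filter

section

variable {Ω β : Type*} {m₁ m₂ mΩ : MeasurableSpace Ω} {μ : Measure Ω} [IsFiniteMeasure μ]

theorem condExp_mul_eq_mul_of_condExp_eq (hm₁₂ : m₁ ≤ m₂) (hm₂ : m₂ ≤ mΩ) {f h : Ω → ℝ}
    (hf : Integrable f μ) (hh : StronglyMeasurable[m₂] h) {C : ℝ} (hC : ∀ᵐ ω ∂μ, ‖h ω‖ ≤ C)
    (hfm : μ[f | m₂] =ᵐ[μ] μ[f | m₁]) :
    μ[h * f | m₁] =ᵐ[μ] μ[f | m₁] * μ[h | m₁] := by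
  have hh_int : Integrable h μ := .of_bound (hh.mono hm₂).aestronglyMeasurable C hC
  have hhf_int : Integrable (h * f) μ := hf.bdd_mul (hh.mono hm₂).aestronglyMeasurable hC
  have hfh_int : Integrable (μ[f | m₁] * h) μ := by
    rw [mul_comm]; exact integrable_condExp.bdd_mul (hh.mono hm₂).aestronglyMeasurable hC
  calc μ[h * f | m₁] =ᵐ[μ] μ[μ[h * f | m₂] | m₁] := (condExp_condExp_of_le hm₁₂ hm₂).symm
    _ =ᵐ[μ] μ[μ[f | m₁] * h | m₁] := by
      refine condExp_congr_ae ?_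
      filter_upwards [condExp_mul_of_stronglyMeasurable_left hh hhf_int hf, hfm] with ω h₁ h₂
      rw [h₁, Pi.mul_apply, Pi.mul_apply, h₂, mul_comm]
    _ =ᵐ[μ] μ[f | m₁] * μ[h | m₁] :=
      condExp_mul_of_stronglyMeasurable_left stronglyMeasurable_condExp hfh_int hh_int

theorem condExp_indicator_compl (hm : m₁ ≤ mΩ) {s : Set Ω} (hs : MeasurableSet s) :
    μ⟦sᶜ | m₁⟧ =ᵐ[μ] 1 - μ⟦s | m₁⟧ := by
  have hs_int : Integrable (s.indicator fun _ => (1 : ℝ)) μ := (integrable_const 1).indicator hs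
  rw [Set.indicator_compl]
  refine (condExp_sub (integrable_const 1) hs_int m₁).trans ?_
  rw [condExp_const hm]
  rfl

theorem condExp_indicator_congr_of_compl (hm₁ : m₁ ≤ mΩ) (hm₂ : m₂ ≤ mΩ) {s : Set Ω}
    (hs : MeasurableSet s) (h : μ⟦sᶜ | m₁⟧ =ᵐ[μ] μ⟦sᶜ | m₂⟧) :
    μ⟦s | m₁⟧ =ᵐ[μ] μ⟦s | m₂⟧ := by
  filter_upwards [condExp_indicator_compl hm₁ hs, condExp_indicator_compl hm₂ hs, h]
    with ω h₁ h₂ h₃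
  simp only [Pi.sub_apply, Pi.one_apply] at h₁ h₂
  linarith

variable [Fintype β]

theorem indicator_preimage_eq_sum_indicator_fiber (Y : Ω → β) (s : Set β)
    [DecidablePred (· ∈ s)] :
    (Y ⁻¹' s).indicator (fun _ => (1 : ℝ)) =
      ∑ b ∈ Finset.univ.filter (fun b : β => b ∈ s), (Y ⁻¹' {b}).indicator fun _ => 1 := by
  classical
  funext ω
  simp [Finset.sum_apply, Set.indicator_apply, Finset.sum_ite_eq]

variable [MeasurableSpace β] [MeasurableSingletonClass β] {Y : Ω → β}

theorem condExp_indicator_preimage_congr (hY : Measurable Y) {s : Set β}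
    (h : ∀ b ∈ s, μ⟦Y ⁻¹' {b} | m₁⟧ =ᵐ[μ] μ⟦Y ⁻¹' {b} | m₂⟧) :
    μ⟦Y ⁻¹' s | m₁⟧ =ᵐ[μ] μ⟦Y ⁻¹' s | m₂⟧ := by
  classical
  have h_int : ∀ b ∈ Finset.univ.filter (fun b : β => b ∈ s),
      Integrable ((Y ⁻¹' {b}).indicator fun _ => (1 : ℝ)) μ :=
    fun b _ => (integrable_const 1).indicator (hY (measurableSet_singleton b))
  rw [indicator_preimage_eq_sum_indicator_fiber]
  refine (condExp_finsetSum h_int m₁).trans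
    (EventuallyEq.trans ?_ (condExp_finsetSum h_int m₂).symm)
  have h_ae : ∀ᵐ ω ∂μ, ∀ b : s, (μ⟦Y ⁻¹' {b.1} | m₁⟧) ω = (μ⟦Y ⁻¹' {b.1} | m₂⟧) ω :=
    ae_all_iff.2 fun b => h b b.2
  filter_upwards [h_ae] with ω hω
  simp only [Finset.sum_apply]
  exact Finset.sum_congr rfl fun b hb => hω ⟨b, (Finset.mem_filter.1 hb).2⟩

theorem condExp_indicator_fiber_congr_of_forall_ne (hm₁ : m₁ ≤ mΩ) (hm₂ : m₂ ≤ mΩ)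
    (hY : Measurable Y) (b₀ : β)
    (h : ∀ b ≠ b₀, μ⟦Y ⁻¹' {b} | m₁⟧ =ᵐ[μ] μ⟦Y ⁻¹' {b} | m₂⟧) :
    μ⟦Y ⁻¹' {b₀} | m₁⟧ =ᵐ[μ] μ⟦Y ⁻¹' {b₀} | m₂⟧ :=
  condExp_indicator_congr_of_compl hm₁ hm₂ (hY (measurableSet_singleton b₀))
    (condExp_indicator_preimage_congr (s := {b₀}ᶜ) hY h)

end

theorem condIndepFun_of_condExp_indicator_eq {Ω β γ : Type*} {m mΩ : MeasurableSpace Ω}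
    [StandardBorelSpace Ω] {μ : Measure Ω} [IsFiniteMeasure μ] [MeasurableSpace β]
    [mγ : MeasurableSpace γ] {Y : Ω → β} {X : Ω → γ} (hY : Measurable Y) (hX : Measurable X)
    (hm : m ≤ mΩ) (hmX : m ≤ mγ.comap X)
    (h : ∀ s, MeasurableSet s → μ⟦Y ⁻¹' s | mγ.comap X⟧ =ᵐ[μ] μ⟦Y ⁻¹' s | m⟧) :
    CondIndepFun m hm Y X μ := by
  rw [condIndepFun_iff_condExp_inter_preimage_eq_mul hY hX]
  intro s t hs ht
  have hXt : StronglyMeasurable[mγ.comap X] ((X ⁻¹' t).indicator fun _ => (1 : ℝ)) :=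
    stronglyMeasurable_const.indicator ⟨t, ht, rfl⟩
  rw [Set.inter_comm, ← Pi.one_def, Set.inter_indicator_one]
  exact condExp_mul_eq_mul_of_condExp_eq hmX hX.comap_le
    ((integrable_const 1).indicator (hY hs)) hXt (C := 1)
    (ae_of_all _ fun ω => (norm_indicator_le_norm_self _ ω).trans_eq norm_one) (h s hs)

theorem mean_encoding_determines_conditional_law_general
    (m q d : ℕ) (Ω : Type*) [MeasurableSpace Ω] [StandardBorelSpace Ω]
    (μ : Measure Ω) [IsProbabilityMeasure μ]
    (Y : Ω → Fin m) (hY : Measurable Y)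
    (X : Ω → (Fin q → ℝ)) (hX : Measurable X)
    (g : (Fin q → ℝ) → (Fin d → ℝ)) (hg : Measurable g)
    (S : Fin (m - 1) → Ω → ℝ)
    (hS : ∀ j ω, S j ω = if ((Y ω : ℕ)) = (j : ℕ) then 1 else 0)
    (hcond : ∀ j : Fin (m - 1),
      μ[S j | MeasurableSpace.comap X inferInstance]
        =ᵐ[μ] μ[S j | MeasurableSpace.comap (fun ω => g (X ω)) inferInstance]) :
    CondIndepFun (MeasurableSpace.comap (fun ω => g (X ω)) inferInstance)
      ((hg.comp hX).comap_le) Y X μ := by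
  have hS_fiber (j : Fin m) (hj : (j : ℕ) < m - 1) :
      S ⟨j, hj⟩ = (Y ⁻¹' {j}).indicator fun _ => 1 := by
    classical
    funext ω
    simp [hS, Set.indicator_apply, Fin.ext_iff]
  have h_fiber (j : Fin m) :
      μ⟦Y ⁻¹' {j} | MeasurableSpace.comap X inferInstance⟧
        =ᵐ[μ] μ⟦Y ⁻¹' {j} | MeasurableSpace.comap (fun ω => g (X ω)) inferInstance⟧ := by
    by_cases hj : (j : ℕ) < m - 1
    · exact hS_fiber j hj ▸ hcond ⟨j, hj⟩
    · have h_encoded (b : Fin m) (hb : b ≠ j) : (b : ℕ) < m - 1 := by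
        have := Fin.val_ne_of_ne hb
        omega
      exact condExp_indicator_fiber_congr_of_forall_ne hX.comap_le (hg.comp hX).comap_le hY j
        fun b hb => hS_fiber b (h_encoded b hb) ▸ hcond ⟨b, h_encoded b hb⟩
  exact condIndepFun_of_condExp_indicator_eq hY hX _ (hg.comp (comap_measurable X)).comap_le
    fun s _ => condExp_indicator_preimage_congr hY fun b _ => h_fiber b

/-- For a discrete response `Y ∈ {1,...,m}` with indicator-vector encoding
`S` (`Sʲ = 1_{Y=j}`, `j = 1,...,m-1`), the conditional distribution of `Y`
given `X` is determined by `E(S|X)`: if `E(S|X) = E(S|g(X))` (componentwise,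
almost surely) for a measurable map `g`, then `Y ⟂ X | g(X)`.  This is the
key fact behind the identity `𝒮_{E(Y|X)} = 𝒮_{Y|X}` for discrete responses. -/
theorem mean_encoding_determines_conditional_law
    (m q d : ℕ) (Ω : Type*) [MeasurableSpace Ω] [StandardBorelSpace Ω] [Nonempty Ω]
    (μ : Measure Ω) [IsProbabilityMeasure μ]
    (Y : Ω → Fin m) (hY : Measurable Y)
    (X : Ω → (Fin q → ℝ)) (hX : Measurable X)
    (g : (Fin q → ℝ) → (Fin d → ℝ)) (hg : Measurable g)
    (S : Fin (m - 1) → Ω → ℝ)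
    (hS : ∀ j ω, S j ω = if ((Y ω : ℕ)) = (j : ℕ) then 1 else 0)
    (hcond : ∀ j : Fin (m - 1),
      μ[S j | MeasurableSpace.comap X inferInstance]
        =ᵐ[μ] μ[S j | MeasurableSpace.comap (fun ω => g (X ω)) inferInstance]) :
    CondIndepFun (MeasurableSpace.comap (fun ω => g (X ω)) inferInstance)
      ((hg.comp hX).comap_le) Y X μ :=
  mean_encoding_determines_conditional_law_general m q d Ω μ Y hY X hX g hg S hS hcond
end
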